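/- If f and g in the maximal ideal of K[[x_1,...,x_n]] are contact equivalent, then for every k ≥ 0 the k-th Tjurina algebras T_k(f) = K[[x]]/⟨f, m^k·j(f)⟩ and T_k(g) = K[[x]]/⟨g, m^k·j(g)⟩ are isomorphic as K-algebras. -/

import Mathlib

noncomputable section

/-- The formal power series ring `K[[x_1,...,x_n]]`. -/
abbrev PS (K : Type*) [Field K] (n : ℕ) := MvPowerSeries (Fin n) K

/-- The maximal ideal `m` of `K[[x]]` (power series with zero constant term). -/
def mx (K : Type*) [Field K] (n : ℕ) : Ideal (PS K n) :=
  RingHom.ker (MvPowerSeries.constantCoeff (σ := Fin n) (R := K))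

/-- The `i`-th formal partial derivative of a power series. -/
def pd {K : Type*} [Field K] {n : ℕ} (i : Fin n) (f : PS K n) : PS K n :=
  fun e => (e i + 1 : ℕ) • MvPowerSeries.coeff (R := K) (e + Finsupp.single i 1) f

/-- The Jacobian ideal `j(f) = ⟨∂f/∂x_1, ..., ∂f/∂x_n⟩`. -/
def jId {K : Type*} [Field K] {n : ℕ} (f : PS K n) : Ideal (PS K n) :=
  Ideal.span (Set.range fun i => pd i f)

/-- The Tjurina ideal `tj(f) = ⟨f⟩ + j(f)`. -/
def tjId {K : Type*} [Field K] {n : ℕ} (f : PS K n) : Ideal (PS K n) :=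
  Ideal.span {f} ⊔ jId f

/-- The ideal defining the `k`-th Tjurina algebra: `⟨f, m^k j(f)⟩`. -/
def TkId {K : Type*} [Field K] {n : ℕ} (k : ℕ) (f : PS K n) : Ideal (PS K n) :=
  Ideal.span {f} ⊔ (mx K n) ^ k * jId f

/-- The ideal defining the `k`-th Milnor algebra: `m^k j(f)`. -/
def MkId {K : Type*} [Field K] {n : ℕ} (k : ℕ) (f : PS K n) : Ideal (PS K n) :=
  (mx K n) ^ k * jId f

/-- Contact equivalence: `g = u · φ(f)`. -/
def ContactEquiv {K : Type*} [Field K] {n : ℕ} (f g : PS K n) : Prop :=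
  ∃ (φ : PS K n ≃ₐ[K] PS K n) (u : (PS K n)ˣ), g = (u : PS K n) * φ f

/-- Right equivalence: `g = φ(f)`. -/
def RightEquiv {K : Type*} [Field K] {n : ℕ} (f g : PS K n) : Prop :=
  ∃ φ : PS K n ≃ₐ[K] PS K n, g = φ f

/-- `f` is contact `N`-determined. -/
def ContactDetermined {K : Type*} [Field K] {n : ℕ} (N : ℕ) (f : PS K n) : Prop :=
  ∀ g : PS K n, g - f ∈ (mx K n) ^ (N + 1) → ContactEquiv f g

/-- `f` is right `N`-determined. -/
def RightDetermined {K : Type*} [Field K] {n : ℕ} (N : ℕ) (f : PS K n) : Prop :=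
  ∀ g : PS K n, g - f ∈ (mx K n) ^ (N + 1) → RightEquiv f g

/-!
An automorphism `φ` of `K[[x]]` preserves `m`, the maximal ideal of a local ring, and maps `j(f)`
onto `j(φ f)`: conjugating `∂ᵢ` by `φ` gives a `K`-derivation, and every `K`-derivation `D`
satisfies `D f = ∑ᵢ D(xᵢ) ∂ᵢ f`, because `D - ∑ᵢ D(xᵢ) ∂ᵢ` kills polynomials and does not lower
the order. Since `∂ᵢ(u f) ∈ ⟨f⟩ + j(f)`, multiplying by a unit `u` does not change `⟨f, mᵏ j(f)⟩`.
So `φ` induces `T_k(f) ≅ T_k(u φ(f))`.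
-/

namespace MvPowerSeries

variable {σ R : Type*}

theorem le_order_sum [Semiring R] {ι : Type*} (s : Finset ι) (f : ι → MvPowerSeries σ R)
    {N : ℕ∞} (h : ∀ i ∈ s, N ≤ (f i).order) : N ≤ (∑ i ∈ s, f i).order :=
  Finset.sum_induction f (fun g => N ≤ g.order)
    (fun _ _ ha hb => (le_min ha hb).trans min_order_le_add) (by simp) h

variable [Fintype σ]

theorem exists_eq_sum_X_mul [CommSemiring R] {f : MvPowerSeries σ R}
    (hf : constantCoeff f = 0) :
    ∃ g : σ → MvPowerSeries σ R, f = ∑ i, X i * g i ∧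
      ∀ i (N : ℕ), ((N + 1 : ℕ) : ℕ∞) ≤ f.order → (N : ℕ∞) ≤ (g i).order := by
  classical
  let _ : LinearOrder σ := LinearOrder.lift' _ (Fintype.equivFin σ).injective
  -- `X i * g i` is the part of `f` made of the monomials whose smallest variable is `i`
  let g : σ → MvPowerSeries σ R := fun i e =>
    if (e + Finsupp.single i 1).support.min = (i : WithTop σ) then
      coeff (e + Finsupp.single i 1) f
    else 0
  have coeff_g (i : σ) (e : σ →₀ ℕ) : coeff e (g i) =
      if (e + Finsupp.single i 1).support.min = (i : WithTop σ) then
        coeff (e + Finsupp.single i 1) f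
      else 0 :=
    rfl
  have coeff_X_mul_g (i : σ) (d : σ →₀ ℕ) :
      coeff d (X i * g i) = if d.support.min = (i : WithTop σ) then coeff d f else 0 := by
    rw [X, coeff_monomial_mul]
    split_ifs with hle hmin hmin
    · rw [one_mul, coeff_g, tsub_add_cancel_of_le hle, if_pos hmin]
    · rw [one_mul, coeff_g, tsub_add_cancel_of_le hle, if_neg hmin]
    · exact absurd (Finsupp.single_le_iff.mpr
        (Nat.one_le_iff_ne_zero.mpr (Finsupp.mem_support_iff.mp (Finset.mem_of_min hmin)))) hle
    · rfl
  refine ⟨g, ?_, fun i N hN => le_order fun e he => ?_⟩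
  · ext d
    simp only [map_sum, coeff_X_mul_g]
    rcases eq_or_ne d 0 with rfl | hd
    · simpa using hf
    · have hne : d.support.Nonempty := Finsupp.support_nonempty_iff.mpr hd
      simp only [← Finset.coe_min' hne, WithTop.coe_eq_coe, Finset.sum_ite_eq, Finset.mem_univ,
        if_true]
  · rw [coeff_g, coeff_of_lt_order, ite_self]
    refine lt_of_lt_of_le ?_ hN
    rw [map_add, Finsupp.degree_single]
    exact_mod_cast Nat.succ_lt_succ (by exact_mod_cast he)

variable [CommRing R]

theorem le_order_derivation_apply {E : Derivation R (MvPowerSeries σ R) (MvPowerSeries σ R)}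
    (hE : ∀ i, E (X i) = 0) (N : ℕ) {f : MvPowerSeries σ R} (hf : (N : ℕ∞) ≤ f.order) :
    (N : ℕ∞) ≤ (E f).order := by
  induction N generalizing f with
  | zero => simp
  | succ N ih =>
    obtain ⟨g, rfl, hg⟩ := exists_eq_sum_X_mul
      (one_le_order_iff_constCoeff_eq_zero.mp (le_trans (by simp) hf))
    have hEg : E (∑ i, X i * g i) = ∑ i, X i * E (g i) := by
      simp [map_sum, Derivation.leibniz, hE]
    rw [hEg]
    refine le_order_sum _ _ fun i _ => ?_
    calc ((N + 1 : ℕ) : ℕ∞) = 1 + N := by push_cast; ring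
      _ ≤ (X i : MvPowerSeries σ R).order + (E (g i)).order :=
        add_le_add (one_le_order_iff_constCoeff_eq_zero.mpr (constantCoeff_X i)) (ih (hg i N hf))
      _ ≤ _ := le_order_mul

theorem derivation_ext {D₁ D₂ : Derivation R (MvPowerSeries σ R) (MvPowerSeries σ R)}
    (h : ∀ i, D₁ (X i) = D₂ (X i)) : D₁ = D₂ := by
  set E := D₁ - D₂
  have hE (i : σ) : E (X i) = 0 := by simp [E, h]
  have hE_coe (p : MvPolynomial σ R) : E p = 0 := by
    induction p using MvPolynomial.induction_on with
    | C a => rw [MvPolynomial.coe_C, c_eq_algebraMap, Derivation.map_algebraMap]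
    | add p q hp hq => rw [MvPolynomial.coe_add, map_add, hp, hq, add_zero]
    | mul_X p i hp => rw [MvPolynomial.coe_mul, MvPolynomial.coe_X, Derivation.leibniz, hp, hE,
        smul_zero, smul_zero, add_zero]
  rw [← sub_eq_zero]
  ext f d
  -- `E` kills the truncation of `f` below degree `|d| + 1`, and the rest has order `> |d|`
  set N := Finsupp.degree d + 1
  have htail : (N : ℕ∞) ≤ (f - truncTotal N f).order :=
    le_order fun e he => by
      rw [map_sub, MvPolynomial.coeff_coe, coeff_truncTotal _ (by exact_mod_cast he), sub_self]
  have hEf : E f = E (f - truncTotal N f) := by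
    rw [map_sub, hE_coe, sub_zero]
  show coeff d (E f) = 0
  rw [hEf]
  refine coeff_of_lt_order (lt_of_lt_of_le ?_ (le_order_derivation_apply hE _ htail))
  exact_mod_cast Nat.lt_succ_self _

theorem derivation_apply_eq_sum (D : Derivation R (MvPowerSeries σ R) (MvPowerSeries σ R))
    (f : MvPowerSeries σ R) : D f = ∑ i, D (X i) * pderiv R i f := by
  classical
  have sum_apply (g : MvPowerSeries σ R) :
      (∑ i, D (X i) • pderiv R i) g = ∑ i, D (X i) * pderiv R i g := by
    rw [← Derivation.coeFnAddMonoidHom_apply, map_sum, Finset.sum_apply]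
    rfl
  have hD : D = ∑ i, D (X i) • pderiv R i :=
    derivation_ext fun j => by simp [sum_apply, pderiv_X, Pi.single_apply]
  rw [← sum_apply, ← hD]

theorem derivation_apply_mem_span_pderiv
    (D : Derivation R (MvPowerSeries σ R) (MvPowerSeries σ R)) (f : MvPowerSeries σ R) :
    D f ∈ Ideal.span (Set.range fun i => pderiv R i f) := by
  rw [derivation_apply_eq_sum]
  exact Ideal.sum_mem _ fun i _ => Ideal.mul_mem_left _ _ (Ideal.subset_span ⟨i, rfl⟩)

end MvPowerSeries

namespace Derivation

variable {R A B : Type*} [CommSemiring R] [CommRing A] [CommRing B] [Algebra R A]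
  [Algebra R B]

def conj (e : A ≃ₐ[R] B) (D : Derivation R A A) : Derivation R B B :=
  Derivation.mk' (e.toLinearMap ∘ₗ (D : A →ₗ[R] A) ∘ₗ e.symm.toLinearMap) fun a b => by
    simp [Derivation.leibniz]

@[simp]
theorem conj_apply (e : A ≃ₐ[R] B) (D : Derivation R A A) (b : B) :
    D.conj e b = e (D (e.symm b)) :=
  rfl

end Derivation

section Tjurina

open MvPowerSeries

variable {K : Type*} [Field K] {n : ℕ}

theorem pd_eq_pderiv (i : Fin n) (f : PS K n) : pd i f = pderiv K i f := by
  ext e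
  rw [coeff_pderiv, mul_comm, ← Nat.cast_add_one, ← nsmul_eq_mul]
  rfl

theorem derivation_apply_mem_jId (D : Derivation K (PS K n) (PS K n)) (f : PS K n) :
    D f ∈ jId f := by
  simpa only [jId, pd_eq_pderiv] using derivation_apply_mem_span_pderiv D f

theorem map_jId (φ : PS K n ≃ₐ[K] PS K n) (f : PS K n) :
    (jId f).map (φ : PS K n →+* PS K n) = jId (φ f) := by
  apply le_antisymm
  · rw [Ideal.map_le_iff_le_comap, jId, Ideal.span_le]
    rintro _ ⟨i, rfl⟩
    simpa [pd_eq_pderiv] using derivation_apply_mem_jId ((pderiv K i).conj φ) (φ f)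
  · rw [jId, Ideal.span_le]
    rintro _ ⟨i, rfl⟩
    simpa [pd_eq_pderiv] using
      Ideal.mem_map_of_mem (φ : PS K n →+* PS K n)
        (derivation_apply_mem_jId ((pderiv K i).conj φ.symm) f)

theorem jId_mul_le (a h : PS K n) : jId (a * h) ≤ Ideal.span {h} ⊔ jId h := by
  rw [jId, Ideal.span_le]
  rintro _ ⟨i, rfl⟩
  show pd i (a * h) ∈ _
  rw [pd_eq_pderiv, Derivation.leibniz, smul_eq_mul, smul_eq_mul]
  refine Ideal.add_mem _ (Ideal.mem_sup_right ?_) (Ideal.mem_sup_left ?_)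
  · exact Ideal.mul_mem_left _ _ (Ideal.subset_span ⟨i, pd_eq_pderiv i h⟩)
  · exact Ideal.mul_mem_right _ _ (Ideal.mem_span_singleton_self h)

theorem TkId_mul_le (k : ℕ) (a h : PS K n) : TkId k (a * h) ≤ TkId k h := by
  refine sup_le ?_ ?_
  · rw [Ideal.span_le, Set.singleton_subset_iff]
    exact Ideal.mem_sup_left (Ideal.mul_mem_left _ _ (Ideal.mem_span_singleton_self h))
  · calc (mx K n) ^ k * jId (a * h)
        ≤ (mx K n) ^ k * (Ideal.span {h} ⊔ jId h) := Ideal.mul_mono_right (jId_mul_le a h)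
      _ = (mx K n) ^ k * Ideal.span {h} ⊔ (mx K n) ^ k * jId h := Ideal.mul_sup _ _ _
      _ ≤ TkId k h := sup_le_sup Ideal.mul_le_right le_rfl

theorem TkId_units_mul (k : ℕ) (u : (PS K n)ˣ) (h : PS K n) :
    TkId k ((u : PS K n) * h) = TkId k h :=
  le_antisymm (TkId_mul_le k _ h) (by simpa using TkId_mul_le k ↑u⁻¹ ((u : PS K n) * h))

theorem mx_eq_maximalIdeal : mx K n = IsLocalRing.maximalIdeal (PS K n) :=
  IsLocalRing.eq_maximalIdeal <|
    RingHom.ker_isMaximal_of_surjective _ fun a => ⟨C a, constantCoeff_C a⟩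

theorem map_mx (φ : PS K n ≃ₐ[K] PS K n) : (mx K n).map (φ : PS K n →+* PS K n) = mx K n := by
  rw [mx_eq_maximalIdeal]
  exact IsLocalRing.map_maximalIdeal_of_surjective _ φ.surjective

theorem map_TkId (k : ℕ) (φ : PS K n ≃ₐ[K] PS K n) (f : PS K n) :
    (TkId k f).map (φ : PS K n →+* PS K n) = TkId k (φ f) := by
  rw [TkId, TkId, Ideal.map_sup, Ideal.map_span, Set.image_singleton, Ideal.map_mul,
    Ideal.map_pow, map_mx, map_jId]
  rfl

end Tjurina

theorem stmt_1_general {K : Type*} [Field K] {n : ℕ} (f g : PS K n)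
    (h : ContactEquiv f g) :
    ∀ k : ℕ, Nonempty ((PS K n ⧸ TkId k f) ≃ₐ[K] (PS K n ⧸ TkId k g)) := by
  obtain ⟨φ, u, rfl⟩ := h
  intro k
  exact ⟨Ideal.quotientEquivAlg _ _ φ (by rw [map_TkId, TkId_units_mul])⟩

/-- contact equivalent power series have isomorphic `k`-th
Tjurina algebras for every `k`. -/
theorem stmt_1 {K : Type*} [Field K] {n : ℕ} (f g : PS K n)
    (hf : f ∈ mx K n) (hg : g ∈ mx K n)
    (h : ContactEquiv f g) :
    ∀ k : ℕ, Nonempty ((PS K n ⧸ TkId k f) ≃ₐ[K] (PS K n ⧸ TkId k g)) :=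
  stmt_1_general f g h
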